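/- Let k be an algebraically closed field, A a finite-dimensional k-algebra, S_0 a set of isomorphism classes of simple right A-modules, and let S_x and S_y be simple right A-modules whose isomorphism classes do not lie in S_0. Let U_x be the largest submodule of the injective hull of S_x such that soc(U_x) ≅ S_x and every composition factor of U_x/soc(U_x) lies in S_0 (such a largest submodule exists and is unique), and define U_y analogously. Then Hom_A(U_x, U_y) = 0 if S_x ≇ S_y, while dim_k End_A(U_x) = 1; in particular every nonzero endomorphism of U_x is an isomorphism. -/

import Mathlib

open CategoryTheory Limits DerivedCategory Pretriangulated

noncomputable section
namespace PervSL2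


/-- The category of right `A`-modules (as modules over `Aᵐᵒᵖ`). -/
abbrev Mod (A : Type) [Ring A] := ModuleCat.{0} Aᵐᵒᵖ

noncomputable instance (R : Type) [Ring R] : HasDerivedCategory.{1} (ModuleCat.{0} R) :=
  HasDerivedCategory.standard _

/-- A finite-dimensional algebra `A` over `k` is symmetric if it admits a `k`-linear form
`l` with `l (a * b) = l (b * a)` whose kernel contains no nonzero one-sided ideal. -/
def IsSymmetricAlg (k A : Type) [Field k] [Ring A] [Algebra k A] : Prop :=
  ∃ l : A →ₗ[k] k, (∀ a b : A, l (a * b) = l (b * a)) ∧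
    (∀ I : Submodule A A, (∀ x ∈ I, l x = 0) → I = ⊥) ∧
    (∀ I : Submodule Aᵐᵒᵖ A, (∀ x ∈ I, l x = 0) → I = ⊥)

/-- The socle of a module: the sum of all simple (= atomic) submodules. -/
def socle (R : Type) [Ring R] (M : Type) [AddCommGroup M] [Module R M] : Submodule R M :=
  sSup {N : Submodule R M | IsAtom N}

/-- The radical of a module: the intersection of all maximal submodules. -/
def radical (R : Type) [Ring R] (M : Type) [AddCommGroup M] [Module R M] : Submodule R M :=
  sInf {N : Submodule R M | IsCoatom N}

/-- The top (head) of a module: the quotient by its radical. -/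
abbrev headOf (R : Type) [Ring R] (M : Type) [AddCommGroup M] [Module R M] : Type :=
  M ⧸ radical R M

/-- Every simple subquotient of `M` is isomorphic to (the underlying module of) a member
of the family `𝒯`.  This formalizes "all composition factors of `M` lie in `𝒯`". -/
def AllCompFactorsIn (R : Type) [Ring R] (M : Type) [AddCommGroup M] [Module R M]
    (𝒯 : Set (ModuleCat.{0} R)) : Prop :=
  ∀ (N : Submodule R M) (P : Submodule R N), IsSimpleModule R (↥N ⧸ P) →
    ∃ T ∈ 𝒯, Nonempty ((↥N ⧸ P) ≃ₗ[R] ↥T)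

/-- `P` (projective) together with an essential epimorphism onto `M` is a projective
cover of `M`. -/
def IsProjectiveCover (R : Type) [Ring R] (P : Type) [AddCommGroup P] [Module R P]
    (M : Type) [AddCommGroup M] [Module R M] (f : P →ₗ[R] M) : Prop :=
  Module.Projective R P ∧ Function.Surjective f ∧
    ∀ N : Submodule R P, Submodule.map f N = ⊤ → N = ⊤

/-- `I` (injective) together with an essential monomorphism from `M` is an injective
hull of `M`. -/
def IsInjectiveHull (R : Type) [Ring R] (I : Type) [AddCommGroup I] [Module R I]
    (M : Type) [AddCommGroup M] [Module R M] (f : M →ₗ[R] I) : Prop :=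
  Module.Injective R I ∧ Function.Injective f ∧
    ∀ N : Submodule R I, N ⊓ LinearMap.range f = ⊥ → N = ⊥

/-- Scalar multiplication by `c : k` on a right `A`-module, for a `k`-algebra `A`;
this is `A`-linear since the image of `k` is central. -/
def centralSmul (k : Type) [CommRing k] {A : Type} [Ring A] [Algebra k A]
    (c : k) (M : Type) [AddCommGroup M] [Module Aᵐᵒᵖ M] : M →ₗ[Aᵐᵒᵖ] M where
  toFun m := algebraMap k Aᵐᵒᵖ c • m
  map_add' := smul_add _
  map_smul' a m := by
    simp only [RingHom.id_apply]
    rw [← mul_smul, ← mul_smul, Algebra.commutes]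

lemma simpleModuleFinite {R M : Type} [Ring R] [AddCommGroup M] [Module R M]
    (h : IsSimpleModule R M) : Module.Finite R M := by
  haveI := h
  haveI : Nontrivial M := IsSimpleModule.nontrivial R M
  obtain ⟨x, hx⟩ := exists_ne (0 : M)
  have hsp : Submodule.span R ({x} : Set M) = ⊤ := by
    rcases eq_bot_or_eq_top (Submodule.span R ({x} : Set M)) with h' | h'
    · exact absurd (Submodule.span_singleton_eq_bot.mp h') hx
    · exact h'
  exact ⟨⟨{x}, by simpa using hsp⟩⟩

lemma finite_of_isZero {A : Type} [Ring A] (M : Mod A) (h : IsZero M) :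
    Module.Finite Aᵐᵒᵖ M := by
  haveI : Subsingleton M := by
    have h0 : (𝟙 M : M ⟶ M).hom = 0 := by rw [h.eq_zero_of_src (𝟙 M), ModuleCat.hom_zero]
    constructor
    intro a b
    have ha := congrFun (congrArg (fun f : M →ₗ[Aᵐᵒᵖ] M => (f : M → M)) h0) a
    have hb := congrFun (congrArg (fun f : M →ₗ[Aᵐᵒᵖ] M => (f : M → M)) h0) b
    simp only [LinearMap.zero_apply] at ha hb
    calc a = (𝟙 M : M ⟶ M).hom a := rfl
    _ = 0 := ha
    _ = (𝟙 M : M ⟶ M).hom b := hb.symm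
    _ = b := rfl
  infer_instance

lemma noetherianRing_op (k A : Type) [Field k] [Ring A] [Algebra k A]
    [FiniteDimensional k A] : IsNoetherianRing Aᵐᵒᵖ := by
  haveI : IsNoetherian k Aᵐᵒᵖ := isNoetherian_of_linearEquiv (MulOpposite.opLinearEquiv k)
  exact isNoetherian_of_tower k inferInstance

lemma finite_submodule (k : Type) [Field k] {A : Type} [Ring A] [Algebra k A]
    [FiniteDimensional k A] {M : Type} [AddCommGroup M] [Module Aᵐᵒᵖ M]
    (hM : Module.Finite Aᵐᵒᵖ M) (U : Submodule Aᵐᵒᵖ M) : Module.Finite Aᵐᵒᵖ U := by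
  haveI := hM
  haveI := noetherianRing_op k A
  haveI : IsNoetherian Aᵐᵒᵖ M := isNoetherian_of_isNoetherianRing_of_finite Aᵐᵒᵖ M
  exact Module.Finite.iff_fg.mpr (IsNoetherian.noetherian U)

lemma finite_quotient {A : Type} [Ring A] {M : Type} [AddCommGroup M] [Module Aᵐᵒᵖ M]
    (hM : Module.Finite Aᵐᵒᵖ M) (N : Submodule Aᵐᵒᵖ M) : Module.Finite Aᵐᵒᵖ (M ⧸ N) := by
  haveI := hM
  exact Module.Finite.of_surjective N.mkQ (Submodule.mkQ_surjective N)

/-- A complete set of pairwise non-isomorphic representatives of the simple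
right modules. -/
structure SimplesFamily (R : Type) [Ring R] (Z : Type) where
  S : Z → ModuleCat.{0} R
  simple : ∀ z, IsSimpleModule R (S z)
  nonIso : ∀ y z : Z, Nonempty ((S y : Type) ≃ₗ[R] (S z : Type)) → y = z
  complete : ∀ (M : Type) (_ : AddCommGroup M) (_ : Module R M),
    IsSimpleModule R M → ∃ z, Nonempty (M ≃ₗ[R] (S z : Type))

lemma SimplesFamily.fin {R : Type} [Ring R] {Z : Type} (SF : SimplesFamily R Z) (z : Z) :
    Module.Finite R (SF.S z) :=
  simpleModuleFinite (SF.simple z)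





variable (A : Type) [Ring A]

/-- The defining property of the bounded derived category of finitely generated right
`A`-modules inside the derived category of all right `A`-modules: bounded homology, all
homology finitely generated. -/
def DbProp (X : DerivedCategory (Mod A)) : Prop :=
  (∃ b : ℕ, ∀ n : ℤ, (b : ℤ) < |n| → IsZero ((homologyFunctor (Mod A) n).obj X)) ∧
  (∀ n : ℤ, Module.Finite Aᵐᵒᵖ ((homologyFunctor (Mod A) n).obj X))

/-- The bounded derived category of finitely generated right `A`-modules. -/
def Db := ObjectProperty.FullSubcategory (DbProp A)

instance : Category (Db A) := ObjectProperty.FullSubcategory.category _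

/-- The homology shift isomorphism in the derived category. -/
def homologyShiftIso (X : DerivedCategory (Mod A)) (n a : ℤ) :
    (homologyFunctor (Mod A) a).obj (X⟦n⟧) ≅ (homologyFunctor (Mod A) (n + a)).obj X :=
  ((homologyFunctor (Mod A) 0).shiftIso n a (n + a) rfl).app X

/-- The shift on the bounded derived category. -/
def DbShift (X : Db A) (n : ℤ) : Db A where
  obj := X.obj⟦n⟧
  property := by
    obtain ⟨⟨b, hb⟩, hfin⟩ := X.property
    constructor
    · refine ⟨b + n.natAbs, fun m hm => ?_⟩
      refine IsZero.of_iso ?_ (homologyShiftIso A X.obj n m)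
      refine hb (n + m) ?_
      have h1 : |m| ≤ |n + m| + |n| := by
        calc |m| = |n + m + -n| := by ring_nf
        _ ≤ |n + m| + |(-n)| := abs_add_le _ _
        _ = |n + m| + |n| := by rw [abs_neg]
      have h2 : (n.natAbs : ℤ) = |n| := Int.abs_eq_natAbs n ▸ rfl
      push_cast at hm
      omega
    · intro m
      haveI := hfin (n + m)
      exact Module.Finite.equiv (homologyShiftIso A X.obj n m).toLinearEquiv.symm

/-- The comparison between the single (stalk) functor to the derived category and the
homology of single complexes. -/
def singleHomologyIso (M : Mod A) (d m : ℤ) :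
    (homologyFunctor (Mod A) m).obj ((singleFunctor (Mod A) d).obj M) ≅
      ((CochainComplex.singleFunctor (Mod A) d).obj M).homology m :=
  (homologyFunctor (Mod A) m).mapIso
      (((SingleFunctors.evaluation _ _ d).mapIso (singleFunctorsPostcompQIso (Mod A))).app M) ≪≫
    (homologyFunctorFactors (Mod A) m).app _

/-- The stalk complex of a finitely generated module `M`, concentrated in degree `d`, as an
object of the bounded derived category `Db A`. -/
def DbSingle (M : Mod A) (hM : Module.Finite Aᵐᵒᵖ M) (d : ℤ) : Db A where
  obj := (singleFunctor (Mod A) d).obj M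
  property := by
    constructor
    · refine ⟨d.natAbs, fun m hm => ?_⟩
      refine IsZero.of_iso ?_ (singleHomologyIso A M d m)
      refine HomologicalComplex.isZero_single_obj_homology _ _ _ _ ?_
      intro h
      subst h
      have h2 : (m.natAbs : ℤ) = |m| := Int.abs_eq_natAbs m ▸ rfl
      omega
    · intro m
      by_cases h : m = d
      · subst h
        haveI := hM
        exact Module.Finite.equiv
          ((singleHomologyIso A M m m).trans
            (HomologicalComplex.singleObjHomologySelfIso _ _ _)).toLinearEquiv.symm
      · refine finite_of_isZero _ (IsZero.of_iso ?_ (singleHomologyIso A M d m))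
        exact HomologicalComplex.isZero_single_obj_homology _ _ _ _ h

variable {A} in
/-- An equivalence on bounded derived categories commuting with shifts (this is the part of
being a triangulated functor we keep track of). -/
def PreservesShift {B : Type} [Ring B] (F : Db A ⥤ Db B) : Prop :=
  ∀ (X : Db A) (n : ℤ), Nonempty (F.obj (DbShift A X n) ≅ DbShift B (F.obj X) n)

/-- The union of the pieces of a filtration strictly below level `i`. -/
def below {Z : Type} (𝒮 : ℕ → Set Z) (i : ℕ) : Set Z := ⋃ j < i, 𝒮 j



-- fg module category and Morita equivalence
def fgMod (R : Type) [Ring R] :=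
  ObjectProperty.FullSubcategory (fun M : ModuleCat.{0} R => Module.Finite R M)

instance (R : Type) [Ring R] : Category (fgMod R) := ObjectProperty.FullSubcategory.category _
instance (R : Type) [Ring R] : Preadditive (fgMod R) := Preadditive.fullSubcategory _

/-- Morita equivalence of `R` and `S`: an additive equivalence between the categories of
finitely generated right modules. -/
def MoritaEquiv (R S : Type) [Ring R] [Ring S] : Prop :=
  ∃ F : fgMod Rᵐᵒᵖ ≌ fgMod Sᵐᵒᵖ, F.functor.Additive

-- homotopy category of cochain complexes of right A-modules
variable (A : Type) [Ring A]

abbrev Kq : CochainComplex (Mod A) ℤ ⥤ HomotopyCategory (Mod A) (ComplexShape.up ℤ) :=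
  HomotopyCategory.quotient (Mod A) (ComplexShape.up ℤ)

/-- `T` is a tilting complex over `A`: a bounded complex of finitely generated projective
right `A`-modules with no nonzero self-`Hom`s in the homotopy category in nonzero shifts,
which generates the bounded homotopy category of finitely generated projectives as a
thick (triangulated, closed under retracts) subcategory. -/
def IsTiltingComplex (T : CochainComplex (Mod A) ℤ) : Prop :=
  (∃ b : ℕ, ∀ n : ℤ, (b : ℤ) < |n| → IsZero (T.X n)) ∧
  (∀ n : ℤ, Module.Projective Aᵐᵒᵖ (T.X n) ∧ Module.Finite Aᵐᵒᵖ (T.X n)) ∧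
  (∀ n : ℤ, n ≠ 0 → ∀ f : (Kq A).obj T ⟶ ((Kq A).obj T)⟦n⟧, f = 0) ∧
  (∀ W : Set (HomotopyCategory (Mod A) (ComplexShape.up ℤ)),
    (Kq A).obj T ∈ W →
    (∀ X Y, X ∈ W → Nonempty (X ≅ Y) → Y ∈ W) →
    (∀ X, X ∈ W → ∀ n : ℤ, X⟦n⟧ ∈ W) →
    (∀ Tr : Triangle (HomotopyCategory (Mod A) (ComplexShape.up ℤ)),
      (Tr ∈ distTriang (HomotopyCategory (Mod A) (ComplexShape.up ℤ))) → Tr.obj₁ ∈ W → Tr.obj₂ ∈ W → Tr.obj₃ ∈ W) →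
    (∀ X Y : HomotopyCategory (Mod A) (ComplexShape.up ℤ),
      (∃ (i : X ⟶ Y) (r : Y ⟶ X), i ≫ r = 𝟙 X) → Y ∈ W → X ∈ W) →
    ∀ K : CochainComplex (Mod A) ℤ,
      (∃ b : ℕ, ∀ n : ℤ, (b : ℤ) < |n| → IsZero (K.X n)) →
      (∀ n : ℤ, Module.Projective Aᵐᵒᵖ (K.X n) ∧ Module.Finite Aᵐᵒᵖ (K.X n)) →
      (Kq A).obj K ∈ W)

instance : HasFiniteBiproducts (CochainComplex (Mod A) ℤ) :=
  HasFiniteBiproducts.of_hasFiniteProducts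

/-- Dreyfus-Schmidt's definition of a perverse equivalence `F : D^b(A) → D^b(B)` relative to
filtrations `𝒮`, `𝒯` (given as increasing chains of index sets for the fixed complete
families `SA`, `SB` of simple modules, exhausted at stage `n`), a perversity function `π`,
and with induced bijection `β` of simple modules. -/
def IsPerverseWith {A B : Type} [Ring A] [Ring B] (F : Db A ⥤ Db B)
    {ZA ZB : Type} (SA : SimplesFamily Aᵐᵒᵖ ZA) (SB : SimplesFamily Bᵐᵒᵖ ZB)
    (n : ℕ) (𝒮 : ℕ → Set ZA) (𝒯 : ℕ → Set ZB) (π : ℕ → ℤ) (β : ZA ≃ ZB) : Prop :=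
  Monotone 𝒮 ∧ Monotone 𝒯 ∧ 𝒮 n = Set.univ ∧ 𝒯 n = Set.univ ∧
  (∀ (i : ℕ) (z : ZA), z ∈ 𝒮 i ↔ β z ∈ 𝒯 i) ∧
  ∀ (i : ℕ) (z : ZA), i ≤ n → z ∈ 𝒮 i → z ∉ below 𝒮 i →
    (∀ m : ℤ, m ≠ -π i →
      AllCompFactorsIn Bᵐᵒᵖ
        ((homologyFunctor (Mod B) m).obj ((F.obj (DbSingle A (SA.S z) (SA.fin z) 0)).obj))
        (SB.S '' below 𝒯 i)) ∧
    ∃ (L₁ L₂ : Submodule Bᵐᵒᵖ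
        ((homologyFunctor (Mod B) (-π i)).obj ((F.obj (DbSingle A (SA.S z) (SA.fin z) 0)).obj))),
      L₁ ≤ L₂ ∧
      AllCompFactorsIn Bᵐᵒᵖ (↥L₁) (SB.S '' below 𝒯 i) ∧
      AllCompFactorsIn Bᵐᵒᵖ
        (((homologyFunctor (Mod B) (-π i)).obj
            ((F.obj (DbSingle A (SA.S z) (SA.fin z) 0)).obj)) ⧸ L₂)
        (SB.S '' below 𝒯 i) ∧
      Nonempty ((↥L₂ ⧸ L₁.comap L₂.subtype) ≃ₗ[Bᵐᵒᵖ] ((SB.S (β z) : Type)))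

/-- A perverse equivalence: perverse relative to the given filtrations and function for some
induced bijection of simple modules. -/
def IsPerverse {A B : Type} [Ring A] [Ring B] (F : Db A ⥤ Db B)
    {ZA ZB : Type} (SA : SimplesFamily Aᵐᵒᵖ ZA) (SB : SimplesFamily Bᵐᵒᵖ ZB)
    (n : ℕ) (𝒮 : ℕ → Set ZA) (𝒯 : ℕ → Set ZB) (π : ℕ → ℤ) : Prop :=
  ∃ β : ZA ≃ ZB, IsPerverseWith F SA SB n 𝒮 𝒯 π β

/-- The perversity function of (simply) alternating perverse equivalences:
`π(0) = 0`, `π(1) = 1`, `π(2) = 0`. -/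
def altπ : ℕ → ℤ := fun i => if i = 1 then 1 else 0

/-!
Inside the injective hull `I(S_x)`, every nonzero submodule of `U_x` contains the essential simple
socle `S_x`. A map `f : U_x → U_y` vanishing on `soc U_x` factors through `U_x / soc U_x`; were it
nonzero, its image would contain `soc U_y ≅ S_y`, making `S_y ∉ S₀` a composition factor of
`U_x / soc U_x`. Hence a nonzero `f` maps `soc U_x` isomorphically onto `soc U_y`, so `S_x ≅ S_y`.
For an endomorphism `f`, Schur's lemma over the algebraically closed `k` makes `f` act on
`soc U_x` as a scalar `c`, and then `f - c` vanishes on the socle, hence everywhere.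
-/

theorem _root_.IsAtom.le_of_ne_bot_of_essential {α : Type*} [Lattice α] [OrderBot α] {a b : α}
    (ha : IsAtom a) (hess : ∀ c, c ⊓ a = ⊥ → c = ⊥) (hb : b ≠ ⊥) : a ≤ b := by
  by_contra h
  exact hb <| hess b <| (ha.le_iff.mp inf_le_right).resolve_right fun h' => h (h' ▸ inf_le_left)

section Modules

variable {R : Type} [Ring R]

lemma socle_eq_of_isAtom_of_forall_le {M : Type} [AddCommGroup M] [Module R M]
    {W : Submodule R M} (hW : IsAtom W) (hle : ∀ N : Submodule R M, N ≠ ⊥ → W ≤ N) :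
    socle R M = W :=
  le_antisymm (sSup_le fun _ hN => ((hN.le_iff.mp (hle _ hN.1)).resolve_left hW.1).ge)
    (le_sSup hW)

lemma nonempty_equiv_map_of_ne_bot {X V : Type} [AddCommGroup X] [Module R X] [AddCommGroup V]
    [Module R V] {W : Submodule R X} [IsSimpleModule R W] (f : X →ₗ[R] V) (hf : W.map f ≠ ⊥) :
    Nonempty (W ≃ₗ[R] W.map f) := by
  refine ⟨.ofBijective (f.submoduleMap W) ⟨?_, f.submoduleMap_surjective W⟩⟩
  refine (f.submoduleMap W).injective_or_eq_zero.resolve_right fun h0 => hf ?_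
  rw [eq_bot_iff]
  rintro _ ⟨x, hx, rfl⟩
  simpa using congr(Subtype.val ($h0 ⟨x, hx⟩))

lemma AllCompFactorsIn.exists_equiv_of_le_range {M V : Type} [AddCommGroup M] [Module R M]
    [AddCommGroup V] [Module R V] {𝒯 : Set (ModuleCat.{0} R)} (h : AllCompFactorsIn R M 𝒯)
    (g : M →ₗ[R] V) {E : Submodule R V} [IsSimpleModule R E] (hE : E ≤ LinearMap.range g) :
    ∃ T ∈ 𝒯, Nonempty (E ≃ₗ[R] T) := by
  let g' : E.comap g →ₗ[R] E := g.restrict fun _ hx => hx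
  have hg' : Function.Surjective g' := by
    rintro ⟨_, he⟩
    obtain ⟨x, rfl⟩ := hE he
    exact ⟨⟨x, he⟩, rfl⟩
  let e := g'.quotKerEquivOfSurjective hg'
  obtain ⟨T, hT, ⟨e'⟩⟩ := h _ _ (IsSimpleModule.congr e)
  exact ⟨T, hT, ⟨e.symm.trans e'⟩⟩

section EssentialSimple

variable {S I : Type} [AddCommGroup S] [Module R S] [AddCommGroup I] [Module R I]

lemma isAtom_range_of_injective (hS : IsSimpleModule R S) {i : S →ₗ[R] I}
    (hi : Function.Injective i) : IsAtom (LinearMap.range i) :=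
  isSimpleModule_iff_isAtom.mp (IsSimpleModule.congr (LinearEquiv.ofInjective i hi).symm)

lemma comap_subtype_range_le_of_ne_bot (hS : IsSimpleModule R S) {i : S →ₗ[R] I}
    (hi : Function.Injective i) (hess : ∀ N : Submodule R I, N ⊓ LinearMap.range i = ⊥ → N = ⊥)
    (U : Submodule R I) {N : Submodule R U} (hN : N ≠ ⊥) :
    (LinearMap.range i).comap U.subtype ≤ N := by
  have hmap : N.map U.subtype ≠ ⊥ := fun h => hN (by simpa using LinearMap.le_ker_iff_map.mpr h)
  simpa [Submodule.comap_map_eq_of_injective U.injective_subtype] using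
    Submodule.comap_mono (f := U.subtype)
      ((isAtom_range_of_injective hS hi).le_of_ne_bot_of_essential hess hmap)

lemma socle_le_of_ne_bot_of_essential (hS : IsSimpleModule R S) {i : S →ₗ[R] I}
    (hi : Function.Injective i) (hess : ∀ N : Submodule R I, N ⊓ LinearMap.range i = ⊥ → N = ⊥)
    (U : Submodule R I) {N : Submodule R U} (hN : N ≠ ⊥) : socle R U ≤ N := by
  have hU : U ≠ ⊥ := by
    rintro rfl
    exact hN (Subsingleton.elim _ _)
  have hatom := isAtom_range_of_injective hS hi
  have := isSimpleModule_iff_isAtom.mpr hatom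
  have hE : IsAtom ((LinearMap.range i).comap U.subtype) :=
    isSimpleModule_iff_isAtom.mp <| IsSimpleModule.congr <|
      Submodule.comapSubtypeEquivOfLe (hatom.le_of_ne_bot_of_essential hess hU)
  rw [socle_eq_of_isAtom_of_forall_le hE fun _ => comap_subtype_range_le_of_ne_bot hS hi hess U]
  exact comap_subtype_range_le_of_ne_bot hS hi hess U hN

end EssentialSimple

/-- The properties of `W = soc U_x ⊆ U_x` that make `U_x` a brick. -/
structure IsSocleExtension (𝒯 : Set (ModuleCat.{0} R)) {M : Type} [AddCommGroup M] [Module R M]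
    (W : Submodule R M) : Prop where
  isSimpleModule : IsSimpleModule R W
  le_of_ne_bot : ∀ N : Submodule R M, N ≠ ⊥ → W ≤ N
  not_equiv : ¬∃ T ∈ 𝒯, Nonempty (W ≃ₗ[R] T)
  allCompFactorsIn : AllCompFactorsIn R (M ⧸ W) 𝒯

lemma isSocleExtension_socle {S I : Type} [AddCommGroup S] [Module R S] [AddCommGroup I]
    [Module R I] (hS : IsSimpleModule R S) {i : S →ₗ[R] I} (hi : Function.Injective i)
    (hess : ∀ N : Submodule R I, N ⊓ LinearMap.range i = ⊥ → N = ⊥) (U : Submodule R I)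
    {𝒯 : Set (ModuleCat.{0} R)} (e : socle R U ≃ₗ[R] S) (hS𝒯 : ¬∃ T ∈ 𝒯, Nonempty (S ≃ₗ[R] T))
    (hU : AllCompFactorsIn R (U ⧸ socle R U) 𝒯) : IsSocleExtension 𝒯 (socle R U) where
  isSimpleModule := IsSimpleModule.congr e
  le_of_ne_bot _ := socle_le_of_ne_bot_of_essential hS hi hess U
  not_equiv := fun ⟨T, hT, ⟨e'⟩⟩ => hS𝒯 ⟨T, hT, ⟨e.symm.trans e'⟩⟩
  allCompFactorsIn := hU

namespace IsSocleExtension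

variable {𝒯 : Set (ModuleCat.{0} R)} {X V : Type} [AddCommGroup X] [Module R X] [AddCommGroup V]
  [Module R V] {W : Submodule R X} {E : Submodule R V}

lemma eq_zero_of_le_ker (hE : IsSocleExtension 𝒯 E) {W₀ : Submodule R X}
    (hX : AllCompFactorsIn R (X ⧸ W₀) 𝒯) {f : X →ₗ[R] V} (hf : W₀ ≤ LinearMap.ker f) : f = 0 := by
  by_contra hne
  have := hE.isSimpleModule
  have hrange : E ≤ LinearMap.range (W₀.liftQ f hf) :=
    hE.le_of_ne_bot _ (by rwa [Submodule.range_liftQ, Ne, LinearMap.range_eq_bot])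
  exact hE.not_equiv (hX.exists_equiv_of_le_range _ hrange)

lemma map_eq_of_ne_zero (hW : IsSocleExtension 𝒯 W) (hE : IsSocleExtension 𝒯 E)
    {f : X →ₗ[R] V} (hf : f ≠ 0) : W.map f = E := by
  have := hW.isSimpleModule
  have hne : W.map f ≠ ⊥ := fun h =>
    hf (hE.eq_zero_of_le_ker hW.allCompFactorsIn (LinearMap.le_ker_iff_map.mpr h))
  obtain ⟨e⟩ := nonempty_equiv_map_of_ne_bot f hne
  have hatom : IsAtom (W.map f) := isSimpleModule_iff_isAtom.mp (IsSimpleModule.congr e.symm)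
  exact ((hatom.le_iff.mp (hE.le_of_ne_bot _ hne)).resolve_left
    (isSimpleModule_iff_isAtom.mp hE.isSimpleModule).1).symm

lemma nonempty_equiv_of_ne_zero (hW : IsSocleExtension 𝒯 W) (hE : IsSocleExtension 𝒯 E)
    {f : X →ₗ[R] V} (hf : f ≠ 0) : Nonempty (W ≃ₗ[R] E) := by
  have := hW.isSimpleModule
  have hmap := hW.map_eq_of_ne_zero hE hf
  obtain ⟨e⟩ := nonempty_equiv_map_of_ne_bot f
    (hmap ▸ (isSimpleModule_iff_isAtom.mp hE.isSimpleModule).1)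
  exact ⟨e.trans (LinearEquiv.ofEq _ _ hmap)⟩

end IsSocleExtension

end Modules

lemma exists_eq_algebraMap_smul_of_isSimpleModule (k : Type) {B M : Type} [Field k] [IsAlgClosed k]
    [Ring B] [Algebra k B] [FiniteDimensional k B] [AddCommGroup M] [Module B M]
    [IsSimpleModule B M] (f : M →ₗ[B] M) : ∃ c : k, ∀ m, f m = algebraMap k B c • m := by
  let _ : Module k M := Module.compHom M (algebraMap k B)
  have : IsScalarTower k B M := ⟨fun c b m => by
    change (c • b) • m = algebraMap k B c • b • m
    rw [Algebra.smul_def, mul_smul]⟩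
  have := simpleModuleFinite (R := B) (M := M) ‹_›
  have : FiniteDimensional k M := Module.Finite.trans B M
  obtain ⟨c, hc⟩ := (IsSimpleModule.algebraMap_end_bijective_of_isAlgClosed k).2 f
  exact ⟨c, fun m => by rw [← hc]; rfl⟩

section CentralSmul

variable (k : Type) [Field k] {A : Type} [Ring A] [Algebra k A] (M : Type) [AddCommGroup M]
  [Module Aᵐᵒᵖ M]

lemma centralSmul_zero : centralSmul k (A := A) 0 M = 0 := by
  ext m
  change algebraMap k Aᵐᵒᵖ 0 • m = 0
  rw [map_zero, zero_smul]

lemma centralSmul_one : centralSmul k (A := A) 1 M = LinearMap.id := by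
  ext m
  change algebraMap k Aᵐᵒᵖ 1 • m = m
  rw [map_one, one_smul]

lemma centralSmul_mul (c d : k) :
    centralSmul k (A := A) (c * d) M = centralSmul k c M ∘ₗ centralSmul k d M := by
  ext m
  change algebraMap k Aᵐᵒᵖ (c * d) • m = algebraMap k Aᵐᵒᵖ c • algebraMap k Aᵐᵒᵖ d • m
  rw [map_mul, mul_smul]

lemma centralSmul_sub (c d : k) :
    centralSmul k (A := A) (c - d) M = centralSmul k c M - centralSmul k d M := by
  ext m
  change algebraMap k Aᵐᵒᵖ (c - d) • m = algebraMap k Aᵐᵒᵖ c • m - algebraMap k Aᵐᵒᵖ d • m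
  rw [map_sub, sub_smul]

lemma centralSmul_bijective {c : k} (hc : c ≠ 0) :
    Function.Bijective (centralSmul k (A := A) c M) := by
  refine Function.bijective_iff_has_inverse.mpr
    ⟨centralSmul k (A := A) c⁻¹ M, fun m => ?_, fun m => ?_⟩
  · rw [← LinearMap.comp_apply, ← centralSmul_mul, inv_mul_cancel₀ hc, centralSmul_one,
      LinearMap.id_apply]
  · rw [← LinearMap.comp_apply, ← centralSmul_mul, mul_inv_cancel₀ hc, centralSmul_one,
      LinearMap.id_apply]

lemma centralSmul_injective [Nontrivial M] :
    Function.Injective (fun c : k => centralSmul k (A := A) c M) := by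
  intro c d (h : centralSmul k c M = centralSmul k d M)
  by_contra hcd
  obtain ⟨m, hm⟩ := exists_ne (0 : M)
  refine hm ((centralSmul_bijective k (A := A) M (sub_ne_zero.mpr hcd)).1 ?_)
  rw [centralSmul_sub, h, sub_self, map_zero]
  rfl

end CentralSmul

lemma IsSocleExtension.exists_eq_centralSmul (k : Type) [Field k] [IsAlgClosed k] {A : Type}
    [Ring A] [Algebra k A] [FiniteDimensional k A] {M : Type} [AddCommGroup M] [Module Aᵐᵒᵖ M]
    {𝒯 : Set (Mod A)} {W : Submodule Aᵐᵒᵖ M} (hW : IsSocleExtension 𝒯 W) (f : M →ₗ[Aᵐᵒᵖ] M) :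
    ∃ c : k, f = centralSmul k c M := by
  have := hW.isSimpleModule
  have hfW : W.map f ≤ W := by
    rcases eq_or_ne f 0 with rfl | hf
    · simp
    · exact (hW.map_eq_of_ne_zero hW hf).le
  obtain ⟨c, hc⟩ := exists_eq_algebraMap_smul_of_isSimpleModule k
    (f.restrict fun _ hx => hfW (Submodule.mem_map_of_mem hx))
  refine ⟨c, sub_eq_zero.mp (hW.eq_zero_of_le_ker hW.allCompFactorsIn fun m hm => ?_)⟩
  simpa [centralSmul, sub_eq_zero] using congr(Subtype.val $(hc ⟨m, hm⟩))

theorem statement_3_general (k : Type) [Field k] [IsAlgClosed k]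
    (A : Type) [Ring A] [Algebra k A] [FiniteDimensional k A]
    (S₀ : Set (Mod A))
    (Sx Sy : Mod A) (hSx : IsSimpleModule Aᵐᵒᵖ Sx) (hSy : IsSimpleModule Aᵐᵒᵖ Sy)
    (hxnot : ¬∃ T ∈ S₀, Nonempty ((Sx : Type) ≃ₗ[Aᵐᵒᵖ] (T : Type)))
    (hynot : ¬∃ T ∈ S₀, Nonempty ((Sy : Type) ≃ₗ[Aᵐᵒᵖ] (T : Type)))
    (Ix Iy : Mod A)
    (ix : (Sx : Type) →ₗ[Aᵐᵒᵖ] (Ix : Type)) (hIx : IsInjectiveHull Aᵐᵒᵖ Ix Sx ix)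
    (iy : (Sy : Type) →ₗ[Aᵐᵒᵖ] (Iy : Type)) (hIy : IsInjectiveHull Aᵐᵒᵖ Iy Sy iy)
    (Ux : Submodule Aᵐᵒᵖ Ix)
    (hUx : Nonempty ((↥(socle Aᵐᵒᵖ ↥Ux)) ≃ₗ[Aᵐᵒᵖ] (Sx : Type)) ∧
      AllCompFactorsIn Aᵐᵒᵖ (↥Ux ⧸ socle Aᵐᵒᵖ ↥Ux) S₀)
    (Uy : Submodule Aᵐᵒᵖ Iy)
    (hUy : Nonempty ((↥(socle Aᵐᵒᵖ ↥Uy)) ≃ₗ[Aᵐᵒᵖ] (Sy : Type)) ∧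
      AllCompFactorsIn Aᵐᵒᵖ (↥Uy ⧸ socle Aᵐᵒᵖ ↥Uy) S₀) :
    (¬Nonempty ((Sx : Type) ≃ₗ[Aᵐᵒᵖ] (Sy : Type)) →
      ∀ f : ↥Ux →ₗ[Aᵐᵒᵖ] ↥Uy, f = 0) ∧
    Function.Bijective (fun c : k => centralSmul k (A := A) c ↥Ux) ∧
    (∀ f : ↥Ux →ₗ[Aᵐᵒᵖ] ↥Ux, f ≠ 0 → Function.Bijective f) := by
  obtain ⟨-, hix, hixess⟩ := hIx
  obtain ⟨-, hiy, hiyess⟩ := hIy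
  obtain ⟨⟨ex⟩, hcfx⟩ := hUx
  obtain ⟨⟨ey⟩, hcfy⟩ := hUy
  have hX := isSocleExtension_socle hSx hix hixess Ux ex hxnot hcfx
  have hY := isSocleExtension_socle hSy hiy hiyess Uy ey hynot hcfy
  have := hX.isSimpleModule
  have := IsSimpleModule.nontrivial Aᵐᵒᵖ (socle Aᵐᵒᵖ Ux)
  have : Nontrivial Ux := (socle Aᵐᵒᵖ Ux).injective_subtype.nontrivial
  refine ⟨fun hxy f => ?_, ⟨centralSmul_injective k Ux, fun f => ?_⟩, fun f hf => ?_⟩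
  · by_contra hf
    obtain ⟨e⟩ := hX.nonempty_equiv_of_ne_zero hY hf
    exact hxy ⟨ex.symm.trans (e.trans ey)⟩
  · obtain ⟨c, rfl⟩ := hX.exists_eq_centralSmul k f
    exact ⟨c, rfl⟩
  · obtain ⟨c, rfl⟩ := hX.exists_eq_centralSmul k f
    exact centralSmul_bijective k Ux fun hc => hf (hc ▸ centralSmul_zero k Ux)

/-- **Universal extensions by a set of simples form bricks.**  Let `S₀` be a set of simple
right `A`-modules and `S_x`, `S_y` simple modules whose classes are not in `S₀`.  Let `U_x`
be the largest submodule of the injective hull of `S_x` with socle `S_x` and all other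
composition factors in `S₀` (the universal extension of `S_x` by `S₀`), similarly `U_y`.
Then `Hom_A(U_x, U_y) = 0` if `S_x ≇ S_y`, while `dim_k End_A(U_x) = 1`; in particular every
nonzero endomorphism of `U_x` is an isomorphism. -/
theorem statement_3 (k : Type) [Field k] [IsAlgClosed k]
    (A : Type) [Ring A] [Algebra k A] [FiniteDimensional k A]
    (S₀ : Set (Mod A)) (hS₀ : ∀ T ∈ S₀, IsSimpleModule Aᵐᵒᵖ (T : Type))
    (Sx Sy : Mod A) (hSx : IsSimpleModule Aᵐᵒᵖ Sx) (hSy : IsSimpleModule Aᵐᵒᵖ Sy)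
    (hxnot : ¬∃ T ∈ S₀, Nonempty ((Sx : Type) ≃ₗ[Aᵐᵒᵖ] (T : Type)))
    (hynot : ¬∃ T ∈ S₀, Nonempty ((Sy : Type) ≃ₗ[Aᵐᵒᵖ] (T : Type)))
    (Ix Iy : Mod A)
    (ix : (Sx : Type) →ₗ[Aᵐᵒᵖ] (Ix : Type)) (hIx : IsInjectiveHull Aᵐᵒᵖ Ix Sx ix)
    (iy : (Sy : Type) →ₗ[Aᵐᵒᵖ] (Iy : Type)) (hIy : IsInjectiveHull Aᵐᵒᵖ Iy Sy iy)
    (Ux : Submodule Aᵐᵒᵖ Ix)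
    (hUx : Nonempty ((↥(socle Aᵐᵒᵖ ↥Ux)) ≃ₗ[Aᵐᵒᵖ] (Sx : Type)) ∧
      AllCompFactorsIn Aᵐᵒᵖ (↥Ux ⧸ socle Aᵐᵒᵖ ↥Ux) S₀)
    (hUxmax : ∀ U : Submodule Aᵐᵒᵖ Ix,
      (Nonempty ((↥(socle Aᵐᵒᵖ ↥U)) ≃ₗ[Aᵐᵒᵖ] (Sx : Type)) ∧
        AllCompFactorsIn Aᵐᵒᵖ (↥U ⧸ socle Aᵐᵒᵖ ↥U) S₀) → U ≤ Ux)
    (Uy : Submodule Aᵐᵒᵖ Iy)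
    (hUy : Nonempty ((↥(socle Aᵐᵒᵖ ↥Uy)) ≃ₗ[Aᵐᵒᵖ] (Sy : Type)) ∧
      AllCompFactorsIn Aᵐᵒᵖ (↥Uy ⧸ socle Aᵐᵒᵖ ↥Uy) S₀)
    (hUymax : ∀ U : Submodule Aᵐᵒᵖ Iy,
      (Nonempty ((↥(socle Aᵐᵒᵖ ↥U)) ≃ₗ[Aᵐᵒᵖ] (Sy : Type)) ∧
        AllCompFactorsIn Aᵐᵒᵖ (↥U ⧸ socle Aᵐᵒᵖ ↥U) S₀) → U ≤ Uy) :
    (¬Nonempty ((Sx : Type) ≃ₗ[Aᵐᵒᵖ] (Sy : Type)) →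
      ∀ f : ↥Ux →ₗ[Aᵐᵒᵖ] ↥Uy, f = 0) ∧
    Function.Bijective (fun c : k => centralSmul k (A := A) c ↥Ux) ∧
    (∀ f : ↥Ux →ₗ[Aᵐᵒᵖ] ↥Ux, f ≠ 0 → Function.Bijective f) :=
  statement_3_general k A S₀ Sx Sy hSx hSy hxnot hynot Ix Iy ix hIx iy hIy Ux hUx Uy hUy

end PervSL2
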